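/- There exists a finite set S of unit vectors in EuclideanSpace ℝ (Fin 3) such that the graph on S in which two vectors are adjacent if and only if they are orthogonal has chromatic number 4. -/

import Mathlib

/-!
Take the thirteen directions of the cube `{-1, 0, 1}³` (three axes, six face diagonals, four body
diagonals). In a 3-colouring the three axes get three distinct colours, and the two face diagonals
orthogonal to an axis form a triangle with it, so they carry the other two colours in one of two
orders. For each of the eight choices of orders, some body diagonal is orthogonal to three face
diagonals of three distinct colours. Conversely, the body diagonals are pairwise non-orthogonal,
so they can share a fourth colour.
-/

open scoped RealInnerProductSpace

/-- The orthogonality graph on a finite set `S` of vectors in `ℝ³`: two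
(distinct) vectors of `S` are adjacent iff they are orthogonal. -/
def orthGraphOn (S : Finset (EuclideanSpace ℝ (Fin 3))) :
    SimpleGraph {x : EuclideanSpace ℝ (Fin 3) // x ∈ S} where
  Adj u v := (u : EuclideanSpace ℝ (Fin 3)) ≠ (v : EuclideanSpace ℝ (Fin 3)) ∧
    ⟪(u : EuclideanSpace ℝ (Fin 3)), (v : EuclideanSpace ℝ (Fin 3))⟫ = 0
  symm := ⟨fun u v h => by
    try dsimp only at h ⊢
    exact ⟨h.1.symm, by rw [real_inner_comm]; exact h.2⟩⟩
  loopless := ⟨fun u h => h.1 rfl⟩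

section OrthogonalityGraph

variable {E : Type*} [NormedAddCommGroup E] [InnerProductSpace ℝ E]

theorem real_inner_normalize_eq_zero_iff (x y : E) :
    ⟪NormedSpace.normalize x, NormedSpace.normalize y⟫ = 0 ↔ ⟪x, y⟫ = 0 := by
  simp only [NormedSpace.normalize, real_inner_smul_left, real_inner_smul_right, mul_eq_zero,
    inv_eq_zero, norm_eq_zero]
  by_cases hx : x = 0 <;> by_cases hy : y = 0 <;> simp [hx, hy]

theorem ne_zero_of_adj_iff_inner_eq_zero {ι : Type*} {H : SimpleGraph ι} {f : ι → E}
    (hH : ∀ i j, H.Adj i j ↔ ⟪f i, f j⟫ = 0) (i : ι) : f i ≠ 0 :=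
  fun h => H.loopless.irrefl i ((hH i i).2 (by simp [h]))

theorem inner_toLp_intCast {n : Type*} [Fintype n] (v w : n → ℤ) :
    ⟪WithLp.toLp 2 fun k => (v k : ℝ), WithLp.toLp 2 fun k => (w k : ℝ)⟫ =
      ((v ⬝ᵥ w : ℤ) : ℝ) := by
  simp [PiLp.inner_apply, dotProduct, mul_comm]

theorem chromaticNumber_orthGraphOn_image {ι : Type*} [Fintype ι]
    [DecidableEq (EuclideanSpace ℝ (Fin 3))] {H : SimpleGraph ι}
    {f : ι → EuclideanSpace ℝ (Fin 3)} (hH : ∀ i j, H.Adj i j ↔ ⟪f i, f j⟫ = 0) :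
    (orthGraphOn (Finset.univ.image f)).chromaticNumber = H.chromaticNumber := by
  have hpre (x : Finset.univ.image f) : ∃ i, f i = x := by
    simpa using Finset.mem_image.1 x.2
  choose σ hσ using hpre
  let toH : orthGraphOn (Finset.univ.image f) →g H :=
    ⟨σ, fun {x y} hxy => (hH _ _).2 (by rw [hσ, hσ]; exact hxy.2)⟩
  let ofH : H →g orthGraphOn (Finset.univ.image f) :=
    ⟨fun i => ⟨f i, Finset.mem_image_of_mem f (Finset.mem_univ i)⟩, fun {i j} hij => by
      have horth := (hH i j).1 hij
      refine ⟨fun hfij => ne_zero_of_adj_iff_inner_eq_zero hH i ?_, horth⟩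
      rwa [← show f i = f j from hfij, inner_self_eq_zero] at horth⟩
  exact le_antisymm (SimpleGraph.chromaticNumber_mono_of_hom toH)
    (SimpleGraph.chromaticNumber_mono_of_hom ofH)

end OrthogonalityGraph

namespace SimpleGraph.Coloring

variable {V : Type*} {G : SimpleGraph V} (C : G.Coloring (Fin 3))

theorem eq_and_eq_or_eq_and_eq_of_adj {u v w x y : V} (hvw : G.Adj v w) (hxy : G.Adj x y)
    (huv : G.Adj u v) (huw : G.Adj u w) (hux : G.Adj u x) (huy : G.Adj u y) :
    C x = C v ∧ C y = C w ∨ C x = C w ∧ C y = C v := by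
  have := C.valid hvw; have := C.valid hxy; have := C.valid huv
  have := C.valid huw; have := C.valid hux; have := C.valid huy
  omega

theorem eq_or_eq_or_eq_of_adj {x a b c : V} (ha : G.Adj x a) (hb : G.Adj x b) (hc : G.Adj x c) :
    C a = C b ∨ C a = C c ∨ C b = C c := by
  have := C.valid ha; have := C.valid hb; have := C.valid hc
  omega

end SimpleGraph.Coloring

def cubeDirection : Fin 13 → Fin 3 → ℤ :=
  ![![1, 0, 0], ![0, 1, 0], ![0, 0, 1],
    ![0, 1, 1], ![0, 1, -1], ![1, 0, 1], ![1, 0, -1], ![1, 1, 0], ![1, -1, 0],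
    ![1, 1, 1], ![1, 1, -1], ![1, -1, 1], ![1, -1, -1]]

def cubeOrthGraph : SimpleGraph (Fin 13) where
  Adj i j := cubeDirection i ⬝ᵥ cubeDirection j = 0
  symm := ⟨fun i j h => by rwa [dotProduct_comm]⟩
  loopless := ⟨by decide⟩

instance : DecidableRel cubeOrthGraph.Adj := fun i j =>
  inferInstanceAs (Decidable (cubeDirection i ⬝ᵥ cubeDirection j = 0))

theorem cubeOrthGraph_colorable_four : cubeOrthGraph.Colorable 4 :=
  ⟨.mk ![0, 1, 2, 1, 2, 0, 2, 0, 1, 3, 3, 3, 3] (by decide)⟩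

theorem cubeOrthGraph_not_colorable_three : ¬ cubeOrthGraph.Colorable 3 := by
  rintro ⟨C⟩
  have hxy := C.valid (show cubeOrthGraph.Adj 0 1 by decide)
  have hxz := C.valid (show cubeOrthGraph.Adj 0 2 by decide)
  have hyz := C.valid (show cubeOrthGraph.Adj 1 2 by decide)
  have h34 := C.eq_and_eq_or_eq_and_eq_of_adj (u := 0) (v := 1) (w := 2) (x := 3) (y := 4)
    (by decide) (by decide) (by decide) (by decide) (by decide) (by decide)
  have h56 := C.eq_and_eq_or_eq_and_eq_of_adj (u := 1) (v := 0) (w := 2) (x := 5) (y := 6)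
    (by decide) (by decide) (by decide) (by decide) (by decide) (by decide)
  have h78 := C.eq_and_eq_or_eq_and_eq_of_adj (u := 2) (v := 0) (w := 1) (x := 7) (y := 8)
    (by decide) (by decide) (by decide) (by decide) (by decide) (by decide)
  have h9 := C.eq_or_eq_or_eq_of_adj (x := 9) (a := 4) (b := 6) (c := 8)
    (by decide) (by decide) (by decide)
  have h10 := C.eq_or_eq_or_eq_of_adj (x := 10) (a := 3) (b := 5) (c := 8)
    (by decide) (by decide) (by decide)
  have h11 := C.eq_or_eq_or_eq_of_adj (x := 11) (a := 3) (b := 6) (c := 7)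
    (by decide) (by decide) (by decide)
  have h12 := C.eq_or_eq_or_eq_of_adj (x := 12) (a := 4) (b := 5) (c := 7)
    (by decide) (by decide) (by decide)
  rcases h34 with ⟨h3, h4⟩ | ⟨h3, h4⟩ <;> rcases h56 with ⟨h5, h6⟩ | ⟨h5, h6⟩ <;>
    rcases h78 with ⟨h7, h8⟩ | ⟨h7, h8⟩ <;> omega

theorem cubeOrthGraph_chromaticNumber : cubeOrthGraph.chromaticNumber = 4 :=
  SimpleGraph.chromaticNumber_eq_iff_colorable_not_colorable.2
    ⟨cubeOrthGraph_colorable_four, cubeOrthGraph_not_colorable_three⟩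

noncomputable def cubeVector (i : Fin 13) : EuclideanSpace ℝ (Fin 3) :=
  WithLp.toLp 2 fun k => (cubeDirection i k : ℝ)

theorem cubeOrthGraph_adj_iff (i j : Fin 13) :
    cubeOrthGraph.Adj i j ↔
      ⟪NormedSpace.normalize (cubeVector i), NormedSpace.normalize (cubeVector j)⟫ = 0 := by
  rw [real_inner_normalize_eq_zero_iff, cubeVector, cubeVector, inner_toLp_intCast,
    Int.cast_eq_zero]
  rfl

/-- There is a finite set of unit vectors in `ℝ³` whose orthogonality graph
has chromatic number four. -/
theorem exists_finite_four_chromatic_orthogonality_graph :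
    ∃ S : Finset (EuclideanSpace ℝ (Fin 3)),
      (∀ x ∈ S, ‖x‖ = 1) ∧ (orthGraphOn S).chromaticNumber = 4 := by
  classical
  refine ⟨Finset.univ.image fun i => NormedSpace.normalize (cubeVector i), ?_, ?_⟩
  · refine Finset.forall_mem_image.2 fun i _ => NormedSpace.norm_normalize fun h => ?_
    exact ne_zero_of_adj_iff_inner_eq_zero cubeOrthGraph_adj_iff i (by simp [h])
  · rw [chromaticNumber_orthGraphOn_image cubeOrthGraph_adj_iff, cubeOrthGraph_chromaticNumber]
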